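/- Let 0 < ρ < 1, let u : A_ρ → ℂ be twice continuously differentiable with Δu = 0 on A_ρ, and suppose there is a real number c < 0 such that H_u(z) = c/z² for all z ∈ A_ρ. Define h(x,y) = √(−c)·ln(x² + y²) and X = (Re u, Im u, h) : A_ρ → ℝ³. Then at every point of A_ρ one has ⟨∂ₓX, ∂_y X⟩ = 0 and |∂ₓX|² = |∂_y X|² > 0 (so X is a conformal immersion), and each of the three components of X is harmonic (so X is a conformal parametrization of a minimal surface). -/

import Mathlib

/-!
With `∂_z` the Wirtinger derivative, the real and imaginary parts of `4 ∑ⱼ (∂_z Xⱼ)²` are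
`|∂ₓX|² − |∂_y X|²` and `−2⟨∂ₓX, ∂_y X⟩`, so conformality of `X` is the vanishing of this sum.
The first two components contribute `4 ∂_z u · ∂_z ū = 4 H_u = 4c/z²`, and `∂_z h = √(−c)/z`
contributes `−4c/z²`. Nondegeneracy follows from `|∂ₓX|² + |∂_y X|² ≥ 4|∂_z h|² > 0`.
Harmonicity of `Re u` and `Im u` is inherited from `u`, and `h = 2√(−c) log |z|` is harmonic
away from the origin.
-/

open Complex MeasureTheory

noncomputable section

/-- Partial derivative in the `x`-direction (as a function of `z = x + iy`). -/
def pdx (u : ℂ → ℂ) (z : ℂ) : ℂ := fderiv ℝ u z 1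

/-- Partial derivative in the `y`-direction. -/
def pdy (u : ℂ → ℂ) (z : ℂ) : ℂ := fderiv ℝ u z Complex.I

/-- Wirtinger derivative `∂_z u = (1/2)(∂ₓu − i ∂_y u)`. -/
def wirt (u : ℂ → ℂ) (z : ℂ) : ℂ := (1 / 2) * (pdx u z - Complex.I * pdy u z)

/-- Hopf differential coefficient `H_u(z) = ∂_z u · ∂_z ū`. -/
def hopf (u : ℂ → ℂ) (z : ℂ) : ℂ :=
  wirt u z * wirt (fun w => (starRingEnd ℂ) (u w)) z

/-- Open annulus `A_ρ = {ρ < |z| < 1}`. -/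
def ann (ρ : ℝ) : Set ℂ := {z : ℂ | ρ < ‖z‖ ∧ ‖z‖ < 1}

/-- Closed annulus `Ā_ρ = {ρ ≤ |z| ≤ 1}`. -/
def cann (ρ : ℝ) : Set ℂ := {z : ℂ | ρ ≤ ‖z‖ ∧ ‖z‖ ≤ 1}

/-- Boundary `∂A_ρ`, the union of the circles `|z| = 1` and `|z| = ρ`. -/
def bdry (ρ : ℝ) : Set ℂ := {z : ℂ | ‖z‖ = 1 ∨ ‖z‖ = ρ}

/-- Wedge product `a ∧ b = Re a · Im b − Im a · Re b`. -/
def wedge (a b : ℂ) : ℝ := a.re * b.im - a.im * b.re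

/-- Radial derivative `∂_r u(z)`, the directional derivative in direction `z/|z|`. -/
def rderiv (u : ℂ → ℂ) (z : ℂ) : ℂ := fderiv ℝ u z (z / (‖z‖ : ℂ))

/-- Degree of `u` on the circle `|z| = r`:
`deg(u, C_r) = (1/2π) ∫₀^{2π} u(re^{iθ}) ∧ ∂_θ[u(re^{iθ})] dθ`. -/
def degCirc (u : ℂ → ℂ) (r : ℝ) : ℝ :=
  (1 / (2 * Real.pi)) * ∫ θ in (0:ℝ)..(2 * Real.pi),
    wedge (u ((r : ℂ) * Complex.exp (Complex.I * θ)))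
      (deriv (fun t : ℝ => u ((r : ℂ) * Complex.exp (Complex.I * t))) θ)

/-- Dirichlet energy `E(u) = (1/2) ∫_{A_ρ} (|∂ₓu|² + |∂_y u|²)`. -/
def energy (ρ : ℝ) (u : ℂ → ℂ) : ℝ :=
  (1 / 2) * ∫ z in ann ρ, (‖pdx u z‖ ^ 2 + ‖pdy u z‖ ^ 2)

end

/-- Partial derivative in the `x`-direction of a real-valued function on `ℂ`. -/
noncomputable def pdxR (f : ℂ → ℝ) (z : ℂ) : ℝ := fderiv ℝ f z 1

/-- Partial derivative in the `y`-direction of a real-valued function on `ℂ`. -/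
noncomputable def pdyR (f : ℂ → ℝ) (z : ℂ) : ℝ := fderiv ℝ f z Complex.I

open InnerProductSpace Laplacian ComplexConjugate

theorem isOpen_ann (ρ : ℝ) : IsOpen (ann ρ) :=
  isOpen_Ioo.preimage continuous_norm

theorem ne_zero_of_mem_ann {ρ : ℝ} (hρ : 0 ≤ ρ) {z : ℂ} (hz : z ∈ ann ρ) : z ≠ 0 := by
  rintro rfl
  have h := hz.1
  rw [norm_zero] at h
  linarith

theorem fderiv_clm_comp_apply {𝕜 E F G : Type*} [NontriviallyNormedField 𝕜]
    [NormedAddCommGroup E] [NormedSpace 𝕜 E] [NormedAddCommGroup F] [NormedSpace 𝕜 F]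
    [NormedAddCommGroup G] [NormedSpace 𝕜 G]
    (l : F →L[𝕜] G) {f : E → F} {z : E} (hf : DifferentiableAt 𝕜 f z) (v : E) :
    fderiv 𝕜 (fun w => l (f w)) z v = l (fderiv 𝕜 f z v) := by
  rw [show (fun w => l (f w)) = l ∘ f from rfl, (l.hasFDerivAt.comp z hf.hasFDerivAt).fderiv]
  rfl

theorem laplacian_eq_fderiv_fderiv_one_add_fderiv_fderiv_I {F : Type*} [NormedAddCommGroup F]
    [NormedSpace ℝ F] {f : ℂ → F} {z : ℂ} (hf : ContDiffAt ℝ 2 f z) :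
    Δ f z = fderiv ℝ (fun w => fderiv ℝ f w 1) z 1 + fderiv ℝ (fun w => fderiv ℝ f w I) z I := by
  have hd : DifferentiableAt ℝ (fderiv ℝ f) z :=
    (hf.fderiv_right (m := 1) (by norm_num)).differentiableAt one_ne_zero
  simp only [laplacian_eq_iteratedFDeriv_complexPlane, iteratedFDeriv_two_apply]
  rw [fderiv_clm_apply hd (differentiableAt_const _),
    fderiv_clm_apply hd (differentiableAt_const _)]
  simp

theorem harmonicOnNhd_of_pdx_pdx_add_pdy_pdy_eq_zero {u : ℂ → ℂ} {s : Set ℂ} (hs : IsOpen s)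
    (hreg : ContDiffOn ℝ 2 u s) (hharm : ∀ z ∈ s, pdx (pdx u) z + pdy (pdy u) z = 0) :
    HarmonicOnNhd u s := fun z hz => by
  refine ⟨hreg.contDiffAt (hs.mem_nhds hz), ?_⟩
  filter_upwards [hs.mem_nhds hz] with w hw
  rw [laplacian_eq_fderiv_fderiv_one_add_fderiv_fderiv_I (hreg.contDiffAt (hs.mem_nhds hw))]
  exact hharm w hw

theorem InnerProductSpace.HarmonicAt.pdxR_pdxR_add_pdyR_pdyR_eq_zero {f : ℂ → ℝ} {z : ℂ}
    (hf : HarmonicAt f z) : pdxR (pdxR f) z + pdyR (pdyR f) z = 0 := by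
  change fderiv ℝ (fun w => fderiv ℝ f w 1) z 1 + fderiv ℝ (fun w => fderiv ℝ f w I) z I = 0
  rw [← laplacian_eq_fderiv_fderiv_one_add_fderiv_fderiv_I hf.1]
  exact hf.2.eq_of_nhds

theorem four_mul_hopf {u : ℂ → ℂ} {z : ℂ} (hu : DifferentiableAt ℝ u z) :
    4 * hopf u z = (pdx u z - I * pdy u z) * (conj (pdx u z) - I * conj (pdy u z)) := by
  have hconj := fderiv_clm_comp_apply conjCLE.toContinuousLinearMap hu
  simp only [ContinuousLinearEquiv.coe_coe, conjCLE_apply] at hconj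
  simp only [hopf, wirt, pdx, pdy, hconj]
  ring

-- With `a = ∂ₓu`, `b = ∂_y u`, `p = ∂ₓh`, `q = ∂_y h`, the hypothesis is `4 ∑ⱼ (∂_z Xⱼ)² = 0`.
theorem conformal_of_mul_conj_add_sq_eq_zero {a b : ℂ} {p q : ℝ} (hpq : (p : ℂ) - I * q ≠ 0)
    (h : (a - I * b) * (conj a - I * conj b) + ((p : ℂ) - I * q) ^ 2 = 0) :
    a.re * b.re + a.im * b.im + p * q = 0 ∧
      a.re ^ 2 + a.im ^ 2 + p ^ 2 = b.re ^ 2 + b.im ^ 2 + q ^ 2 ∧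
      0 < a.re ^ 2 + a.im ^ 2 + p ^ 2 := by
  have hre := congrArg Complex.re h
  have him := congrArg Complex.im h
  simp only [pow_two, add_re, mul_re, sub_re, I_re, zero_mul, I_im, one_mul, zero_sub,
    sub_neg_eq_add, conj_re, conj_im, mul_neg, zero_add, sub_im, mul_im, neg_zero, ofReal_re,
    ofReal_im, mul_zero, sub_self, sub_zero, neg_mul, neg_neg, zero_re, add_im, zero_im] at hre him
  have hpq' : 0 < p ^ 2 + q ^ 2 := by
    contrapose! hpq
    have hp : p = 0 := by nlinarith
    have hq : q = 0 := by nlinarith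
    simp [hp, hq]
  refine ⟨by linear_combination -him / 2, by linear_combination hre, ?_⟩
  nlinarith [sq_nonneg a.re, sq_nonneg a.im, sq_nonneg b.re, sq_nonneg b.im]

theorem re_sq_add_im_sq_pos {z : ℂ} (hz : z ≠ 0) : 0 < z.re ^ 2 + z.im ^ 2 := by
  simpa [Complex.normSq_apply, sq] using Complex.normSq_pos.mpr hz

theorem hasFDerivAt_re_sq_add_im_sq (z : ℂ) :
    HasFDerivAt (fun w : ℂ => w.re ^ 2 + w.im ^ 2)
      ((2 * z.re) • reCLM + (2 * z.im) • imCLM) z := by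
  refine (HasFDerivAt.fun_add (reCLM.hasFDerivAt.pow 2) (imCLM.hasFDerivAt.pow 2)).congr_fderiv ?_
  ext v
  simp

theorem fderiv_log_re_sq_add_im_sq_apply (k : ℝ) {z : ℂ} (hz : z ≠ 0) (v : ℂ) :
    fderiv ℝ (fun w : ℂ => k * Real.log (w.re ^ 2 + w.im ^ 2)) z v
      = 2 * k * (z.re * v.re + z.im * v.im) / (z.re ^ 2 + z.im ^ 2) := by
  have hpos := (re_sq_add_im_sq_pos hz).ne'
  rw [(((hasFDerivAt_re_sq_add_im_sq z).log hpos).const_mul k).fderiv]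
  simp only [smul_add, add_apply, smul_apply, reCLM_apply, smul_eq_mul, imCLM_apply]
  field_simp

theorem pdxR_sub_I_mul_pdyR_log_re_sq_add_im_sq (k : ℝ) {z : ℂ} (hz : z ≠ 0) :
    (pdxR (fun w : ℂ => k * Real.log (w.re ^ 2 + w.im ^ 2)) z : ℂ)
      - I * pdyR (fun w : ℂ => k * Real.log (w.re ^ 2 + w.im ^ 2)) z = 2 * k / z := by
  rw [pdxR, pdyR, fderiv_log_re_sq_add_im_sq_apply k hz, fderiv_log_re_sq_add_im_sq_apply k hz]
  have hpos := (re_sq_add_im_sq_pos hz).ne'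
  rw [eq_div_iff hz]
  apply Complex.ext <;>
  · simp only [Complex.mul_re, Complex.mul_im, Complex.sub_re, Complex.sub_im,
      Complex.ofReal_re, Complex.ofReal_im, Complex.I_re, Complex.I_im,
      Complex.re_ofNat, Complex.im_ofNat, Complex.one_re, Complex.one_im]
    field_simp
    ring

theorem harmonicAt_log_re_sq_add_im_sq (k : ℝ) {z : ℂ} (hz : z ≠ 0) :
    HarmonicAt (fun w : ℂ => k * Real.log (w.re ^ 2 + w.im ^ 2)) z := by
  have h : (fun w : ℂ => k * Real.log (w.re ^ 2 + w.im ^ 2)) = (2 * k) • fun w => Real.log ‖w‖ := by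
    funext w
    have hw : w.re ^ 2 + w.im ^ 2 = ‖w‖ ^ 2 := by
      rw [Complex.sq_norm, Complex.normSq_apply]
      ring
    rw [Pi.smul_apply, smul_eq_mul, hw, Real.log_pow]
    push_cast
    ring
  rw [h]
  exact (analyticAt_id.harmonicAt_log_norm hz).const_smul

theorem stmt17_general (ρ : ℝ) (hρ0 : 0 < ρ) (u : ℂ → ℂ)
    (hreg : ContDiffOn ℝ 2 u (ann ρ))
    (hharm : ∀ z ∈ ann ρ, pdx (pdx u) z + pdy (pdy u) z = 0)
    (c : ℝ) (hc : c < 0)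
    (hhopf : ∀ z ∈ ann ρ, hopf u z = (c : ℂ) / z ^ 2)
    (h X1 X2 X3 : ℂ → ℝ)
    (hh : h = fun z => Real.sqrt (-c) * Real.log (z.re ^ 2 + z.im ^ 2))
    (hX1 : X1 = fun z => (u z).re) (hX2 : X2 = fun z => (u z).im) (hX3 : X3 = h) :
    ∀ z ∈ ann ρ,
      (pdxR X1 z * pdyR X1 z + pdxR X2 z * pdyR X2 z + pdxR X3 z * pdyR X3 z = 0) ∧
      ((pdxR X1 z) ^ 2 + (pdxR X2 z) ^ 2 + (pdxR X3 z) ^ 2 =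
        (pdyR X1 z) ^ 2 + (pdyR X2 z) ^ 2 + (pdyR X3 z) ^ 2) ∧
      (0 < (pdxR X1 z) ^ 2 + (pdxR X2 z) ^ 2 + (pdxR X3 z) ^ 2) ∧
      (pdxR (pdxR X1) z + pdyR (pdyR X1) z = 0) ∧
      (pdxR (pdxR X2) z + pdyR (pdyR X2) z = 0) ∧
      (pdxR (pdxR X3) z + pdyR (pdyR X3) z = 0) := by
  subst hX1 hX2 hX3 hh
  intro z hz
  have hz0 := ne_zero_of_mem_ann hρ0.le hz
  have hu := harmonicOnNhd_of_pdx_pdx_add_pdy_pdy_eq_zero (isOpen_ann ρ) hreg hharm z hz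
  have hud : DifferentiableAt ℝ u z := hu.1.differentiableAt two_ne_zero
  have hre : ∀ v, fderiv ℝ (fun w => (u w).re) z v = (fderiv ℝ u z v).re :=
    fderiv_clm_comp_apply reCLM hud
  have him : ∀ v, fderiv ℝ (fun w => (u w).im) z v = (fderiv ℝ u z v).im :=
    fderiv_clm_comp_apply imCLM hud
  have hlog := pdxR_sub_I_mul_pdyR_log_re_sq_add_im_sq (Real.sqrt (-c)) hz0
  set p := pdxR (fun w : ℂ => Real.sqrt (-c) * Real.log (w.re ^ 2 + w.im ^ 2)) z
  set q := pdyR (fun w : ℂ => Real.sqrt (-c) * Real.log (w.re ^ 2 + w.im ^ 2)) z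
  have hk : 0 < Real.sqrt (-c) := Real.sqrt_pos.2 (neg_pos.2 hc)
  have hpq : (p : ℂ) - I * q ≠ 0 := by
    rw [hlog]
    exact div_ne_zero (by exact_mod_cast (mul_pos two_pos hk).ne') hz0
  have hsum : (pdx u z - I * pdy u z) * (conj (pdx u z) - I * conj (pdy u z))
      + ((p : ℂ) - I * q) ^ 2 = 0 := by
    have hk2 : (Real.sqrt (-c) : ℂ) ^ 2 = -c := by exact_mod_cast Real.sq_sqrt (neg_pos.2 hc).le
    rw [← four_mul_hopf hud, hhopf z hz, hlog]
    field_simp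
    linear_combination 4 * hk2
  obtain ⟨hortho, hiso, hpos⟩ := conformal_of_mul_conj_add_sq_eq_zero hpq hsum
  refine ⟨?_, ?_, ?_, (hu.comp_CLM reCLM).pdxR_pdxR_add_pdyR_pdyR_eq_zero,
    (hu.comp_CLM imCLM).pdxR_pdxR_add_pdyR_pdyR_eq_zero,
    (harmonicAt_log_re_sq_add_im_sq _ hz0).pdxR_pdxR_add_pdyR_pdyR_eq_zero⟩
  all_goals simp only [pdxR, pdyR, hre, him]
  exacts [hortho, hiso, hpos]

/-- If `u` is harmonic on `A_ρ` with `H_u(z) = c/z²`, `c < 0`, then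
`X = (Re u, Im u, √(−c)·ln(x² + y²))` is a conformal immersion whose components are
harmonic, i.e. a conformal parametrization of a minimal surface. -/
theorem stmt17 (ρ : ℝ) (hρ0 : 0 < ρ) (hρ1 : ρ < 1) (u : ℂ → ℂ)
    (hreg : ContDiffOn ℝ 2 u (ann ρ))
    (hharm : ∀ z ∈ ann ρ, pdx (pdx u) z + pdy (pdy u) z = 0)
    (c : ℝ) (hc : c < 0)
    (hhopf : ∀ z ∈ ann ρ, hopf u z = (c : ℂ) / z ^ 2)
    (h X1 X2 X3 : ℂ → ℝ)
    (hh : h = fun z => Real.sqrt (-c) * Real.log (z.re ^ 2 + z.im ^ 2))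
    (hX1 : X1 = fun z => (u z).re) (hX2 : X2 = fun z => (u z).im) (hX3 : X3 = h) :
    ∀ z ∈ ann ρ,
      (pdxR X1 z * pdyR X1 z + pdxR X2 z * pdyR X2 z + pdxR X3 z * pdyR X3 z = 0) ∧
      ((pdxR X1 z) ^ 2 + (pdxR X2 z) ^ 2 + (pdxR X3 z) ^ 2 =
        (pdyR X1 z) ^ 2 + (pdyR X2 z) ^ 2 + (pdyR X3 z) ^ 2) ∧
      (0 < (pdxR X1 z) ^ 2 + (pdxR X2 z) ^ 2 + (pdxR X3 z) ^ 2) ∧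
      (pdxR (pdxR X1) z + pdyR (pdyR X1) z = 0) ∧
      (pdxR (pdxR X2) z + pdyR (pdyR X2) z = 0) ∧
      (pdxR (pdxR X3) z + pdyR (pdyR X3) z = 0) :=
  stmt17_general ρ hρ0 u hreg hharm c hc hhopf h X1 X2 X3 hh hX1 hX2 hX3
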